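/- Let p(z,w) = z^m − w^n with m, n ≥ 1 and J = 𝕋. Then p is expansive on 𝕋 if and only if m does not divide n. Here expansive means: for every nonempty relatively open set U ⊂ 𝕋 there exists a natural number r such that U^{(r)} = 𝕋, where U^{(r)} = {w ∈ 𝕋 : ∃ z₁ ∈ U, z₂,…,z_r ∈ 𝕋 with z_k^m = z_{k+1}^n for k=1,…,r−1 and z_r^m = w^n}. -/

import Mathlib

/-!
Write points of the circle as `𝐞 x = exp (2πix)`; a step `z ↦ w` with `z ^ m = w ^ n` is then
`x ↦ (m x + j) / n` with `j ∈ ℤ`.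

If `n = m q`, the powers `u_k = z_k ^ m` along a path satisfy `u_k = u_{k+1} ^ q`, so a path
ending at `1` starts at a root of `z ^ m = 1`: the open set `{z ^ m ≠ 1}` never reaches `1`.

If `m ∤ n`, let `g = gcd m n < m`. Correcting only the first and the last of `s + 2` steps, Bezout
for `m ^ (s + 1)` and `n ^ (s + 1)` shows that the starting points of the paths ending at `𝐞 y`
contain a full coset of `(g ^ (s + 1) / m ^ (s + 2)) ℤ`. This mesh tends to `0`, so for large `s`
every arc contains such a starting point, whatever `y` is.
-/

/-- `U^{(r)}`: endpoints of length-`r` paths of the correspondence `z^m = w^n`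
on the unit circle starting in `U`. -/
def pathEndT (m n r : ℕ) (U : Set ℂ) : Set ℂ :=
  {w | ∃ z : Fin (r + 1) → ℂ, (∀ k, ‖z k‖ = 1) ∧
    (∀ k : Fin r, z k.castSucc ^ m = z k.succ ^ n) ∧ z 0 ∈ U ∧ z (Fin.last r) = w}

open Real FourierTransform

lemma exists_int_mul_pow_add_mul_pow_eq_gcd_pow (m n k : ℕ) :
    ∃ c d : ℤ, c * m ^ k + d * n ^ k = (Nat.gcd m n ^ k : ℕ) := by
  refine ⟨Nat.gcdA (m ^ k) (n ^ k), Nat.gcdB (m ^ k) (n ^ k), ?_⟩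
  rw [← Nat.pow_gcd_pow, Nat.gcd_eq_gcd_ab]
  push_cast
  ring

lemma exists_gcd_pow_div_pow_lt {m n : ℕ} (hm : m ≠ 0) (hmn : ¬ m ∣ n) {δ : ℝ} (hδ : 0 < δ) :
    ∃ s : ℕ, (Nat.gcd m n : ℝ) ^ (s + 1) / m ^ (s + 2) < δ := by
  have hm' : (0 : ℝ) < m := by positivity
  have hgm : Nat.gcd m n < m :=
    (Nat.gcd_le_left n (Nat.pos_of_ne_zero hm)).lt_of_ne (mt Nat.gcd_eq_left_iff_dvd.1 hmn)
  have hρ : (Nat.gcd m n : ℝ) / m < 1 := (div_lt_one hm').2 (by exact_mod_cast hgm)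
  obtain ⟨s, hs⟩ := exists_pow_lt_of_lt_one hδ hρ
  refine ⟨s, lt_of_le_of_lt ?_ hs⟩
  calc (Nat.gcd m n : ℝ) ^ (s + 1) / m ^ (s + 2)
      = ((Nat.gcd m n : ℝ) / m) ^ s * ((Nat.gcd m n : ℝ) / m / m) := by
        rw [div_pow]; field_simp; ring
    _ ≤ ((Nat.gcd m n : ℝ) / m) ^ s := by
        refine mul_le_of_le_one_right (by positivity) ((div_le_self (by positivity) ?_).trans hρ.le)
        exact_mod_cast Nat.one_le_iff_ne_zero.2 hm

lemma pow_pow_eq_of_chain {M : Type*} [Monoid M] {m q r : ℕ} {z : Fin (r + 1) → M}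
    (hz : ∀ k : Fin r, z k.castSucc ^ m = z k.succ ^ (m * q)) (i : Fin (r + 1)) :
    (z i ^ m) ^ q ^ (i : ℕ) = z 0 ^ m := by
  induction i using Fin.induction with
  | zero => simp
  | succ k ih =>
    rw [Fin.val_succ, pow_succ', pow_mul, ← pow_mul (z k.succ), ← hz k, ← ih, Fin.val_castSucc]

lemma fourierChar_intCast (k : ℤ) : 𝐞 (k : ℝ) = 1 := by
  rw [fourierChar_apply', Circle.exp_two_pi_mul_int]

lemma fourierChar_add_intCast (x : ℝ) (k : ℤ) : 𝐞 (x + k) = 𝐞 x := by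
  rw [AddChar.map_add_eq_mul, fourierChar_intCast, mul_one]

lemma fourierChar_natCast_mul (k : ℕ) (x : ℝ) : 𝐞 (k * x) = 𝐞 x ^ k := by
  rw [← nsmul_eq_mul, AddChar.map_nsmul_eq_pow]

lemma exists_fourierChar_eq {w : ℂ} (hw : ‖w‖ = 1) : ∃ x : ℝ, (𝐞 x : ℂ) = w := by
  obtain ⟨t, ht⟩ := Circle.exp_surjective ⟨w, mem_sphere_zero_iff_norm.2 hw⟩
  refine ⟨t / (2 * π), ?_⟩
  rw [fourierChar_apply', mul_div_cancel₀ t (by positivity), ht]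

lemma exists_norm_eq_one_pow_eq_neg_one {m : ℕ} (hm : m ≠ 0) :
    ∃ w : ℂ, ‖w‖ = 1 ∧ w ^ m = -1 := by
  obtain ⟨w, hw⟩ := IsAlgClosed.exists_pow_nat_eq (-1 : ℂ) (Nat.pos_of_ne_zero hm)
  refine ⟨w, (pow_eq_one_iff_of_nonneg (norm_nonneg w) hm).1 ?_, hw⟩
  rw [← norm_pow, hw, norm_neg, norm_one]

section Paths

variable {m n r : ℕ} {U : Set ℂ}

lemma norm_eq_one_of_mem_pathEndT {w : ℂ} (hw : w ∈ pathEndT m n r U) : ‖w‖ = 1 := by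
  obtain ⟨z, hz1, -, -, rfl⟩ := hw
  exact hz1 _

lemma mem_pathEndT_zero {z : ℂ} (hz : z ∈ U) (hz1 : ‖z‖ = 1) : z ∈ pathEndT m n 0 U :=
  ⟨fun _ => z, fun _ => hz1, fun k => k.elim0, hz, rfl⟩

lemma mem_pathEndT_succ {v w : ℂ} (hv : v ∈ pathEndT m n r U) (hw : ‖w‖ = 1)
    (hvw : v ^ m = w ^ n) : w ∈ pathEndT m n (r + 1) U := by
  obtain ⟨z, hz1, hz, hz0, rfl⟩ := hv
  refine ⟨Fin.snoc z w, Fin.lastCases (by simpa using hw) (by simpa using hz1),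
    Fin.lastCases (by simpa using hvw) fun k => by
      rw [Fin.snoc_castSucc, Fin.succ_castSucc, Fin.snoc_castSucc]; exact hz k,
    show Fin.snoc (α := fun _ => ℂ) z w (Fin.castSucc 0) ∈ U by rwa [Fin.snoc_castSucc], by simp⟩

lemma fourierChar_mem_pathEndT_succ (hn : n ≠ 0) {x : ℝ} (hx : (𝐞 x : ℂ) ∈ pathEndT m n r U)
    (j : ℤ) : (𝐞 ((m * x + j) / n) : ℂ) ∈ pathEndT m n (r + 1) U := by
  refine mem_pathEndT_succ hx (Circle.norm_coe _) ?_
  rw [← Circle.coe_pow, ← Circle.coe_pow, ← fourierChar_natCast_mul, ← fourierChar_natCast_mul,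
    mul_div_cancel₀ _ (Nat.cast_ne_zero.2 hn), fourierChar_add_intCast]

lemma fourierChar_mem_pathEndT_add (hn : n ≠ 0) {x : ℝ} (hx : (𝐞 x : ℂ) ∈ pathEndT m n r U)
    (k : ℕ) : (𝐞 ((m / n) ^ k * x) : ℂ) ∈ pathEndT m n (r + k) U := by
  induction k with
  | zero => simpa using hx
  | succ k ih =>
    have hstep : (m * ((m / n) ^ k * x) + (0 : ℤ)) / n = ((m : ℝ) / n) ^ (k + 1) * x := by
      rw [Int.cast_zero, add_zero, pow_succ]
      ring
    rw [← add_assoc, ← hstep]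
    exact fourierChar_mem_pathEndT_succ hn ih 0

lemma fourierChar_mem_pathEndT_of_eq (hn : n ≠ 0) {x y : ℝ} (hx : (𝐞 x : ℂ) ∈ U) {s : ℕ}
    {c d : ℤ} (hxy : m ^ (s + 2) * x + c * m ^ (s + 1) + d * n ^ (s + 1) = n ^ (s + 2) * y) :
    (𝐞 y : ℂ) ∈ pathEndT m n (s + 2) U := by
  have h₁ := fourierChar_mem_pathEndT_succ hn (mem_pathEndT_zero (m := m) hx (Circle.norm_coe _)) c
  have h₂ := fourierChar_mem_pathEndT_succ hn (fourierChar_mem_pathEndT_add hn h₁ s) d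
  rw [zero_add, add_comm 1 s] at h₂
  have hy : (m * ((m / n) ^ s * ((m * x + c) / n)) + d) / n = y := by
    have hn' : (n : ℝ) ≠ 0 := Nat.cast_ne_zero.2 hn
    rw [div_pow]
    field_simp
    linear_combination hxy
  rwa [hy] at h₂

end Paths

lemma one_notMem_pathEndT_mul {m q r : ℕ} {U : Set ℂ} (hU : ∀ z ∈ U, z ^ m ≠ 1) :
    (1 : ℂ) ∉ pathEndT m (m * q) r U := by
  rintro ⟨z, -, hz, hz0, hlast⟩
  have hpow := pow_pow_eq_of_chain hz (Fin.last r)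
  rw [hlast, one_pow, one_pow] at hpow
  exact hU _ hz0 hpow.symm

lemma exists_fourierChar_mem_of_isOpen {V : Set ℂ} (hV : IsOpen V)
    (hne : (V ∩ {z : ℂ | ‖z‖ = 1}).Nonempty) :
    ∃ x₀ δ : ℝ, 0 < δ ∧ ∀ x, |x - x₀| < δ → (𝐞 x : ℂ) ∈ V ∩ {z : ℂ | ‖z‖ = 1} := by
  obtain ⟨z₀, hz₀V, hz₀⟩ := hne
  obtain ⟨x₀, rfl⟩ := exists_fourierChar_eq hz₀
  have hopen : IsOpen ((fun x : ℝ => (𝐞 x : ℂ)) ⁻¹' V) :=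
    hV.preimage (continuous_subtype_val.comp continuous_fourierChar)
  obtain ⟨δ, hδ, hball⟩ := Metric.isOpen_iff.1 hopen x₀ hz₀V
  exact ⟨x₀, δ, hδ, fun x hx => ⟨hball (by rwa [Metric.mem_ball, Real.dist_eq]), Circle.norm_coe _⟩⟩

lemma exists_pathEndT_eq_of_not_dvd {m n : ℕ} (hm : m ≠ 0) (hmn : ¬ m ∣ n) {U : Set ℂ}
    {x₀ δ : ℝ} (hδ : 0 < δ) (hU : ∀ x, |x - x₀| < δ → (𝐞 x : ℂ) ∈ U) :
    ∃ r, pathEndT m n r U = {z : ℂ | ‖z‖ = 1} := by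
  have hn : n ≠ 0 := by rintro rfl; exact hmn (dvd_zero m)
  obtain ⟨s, hs⟩ := exists_gcd_pow_div_pow_lt hm hmn hδ
  obtain ⟨c, d, hcd⟩ := exists_int_mul_pow_add_mul_pow_eq_gcd_pow m n (s + 1)
  set h : ℝ := (Nat.gcd m n : ℝ) ^ (s + 1) / m ^ (s + 2) with h_def
  have hpos : 0 < h := by
    have := Nat.gcd_pos_of_pos_left n (Nat.pos_of_ne_zero hm)
    positivity
  refine ⟨s + 2, subset_antisymm (fun w hw => norm_eq_one_of_mem_pathEndT hw) fun w hw => ?_⟩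
  obtain ⟨y, rfl⟩ := exists_fourierChar_eq hw
  -- the starting points reaching `𝐞 y` include a coset of `h ℤ`; pick its point in `[x₀, x₀ + h)`
  obtain ⟨t, ⟨hlo, hhi⟩, -⟩ :=
    existsUnique_sub_zsmul_mem_Ico hpos (n ^ (s + 2) * y / m ^ (s + 2)) x₀
  rw [zsmul_eq_mul] at hlo hhi
  have hx : |n ^ (s + 2) * y / m ^ (s + 2) - t * h - x₀| < δ :=
    abs_sub_lt_iff.2 ⟨by linarith, by linarith⟩
  refine fourierChar_mem_pathEndT_of_eq hn (hU _ hx) (c := t * c) (d := t * d) ?_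
  have hm' : (m : ℝ) ≠ 0 := Nat.cast_ne_zero.2 hm
  have hcdR : (c : ℝ) * m ^ (s + 1) + d * n ^ (s + 1) = (Nat.gcd m n : ℝ) ^ (s + 1) := by
    exact_mod_cast hcd
  rw [h_def]
  push_cast
  field_simp
  linear_combination (t : ℝ) * hcdR

theorem stmt_6_general (m n : ℕ) (hm : 1 ≤ m) :
    (∀ U : Set ℂ, U ⊆ {z : ℂ | ‖z‖ = 1} → U.Nonempty →
        (∃ V : Set ℂ, IsOpen V ∧ U = V ∩ {z : ℂ | ‖z‖ = 1}) →
        ∃ r : ℕ, pathEndT m n r U = {z : ℂ | ‖z‖ = 1}) ↔ ¬ m ∣ n := by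
  have hm₀ : m ≠ 0 := Nat.one_le_iff_ne_zero.1 hm
  constructor
  · rintro hexp ⟨q, rfl⟩
    obtain ⟨w, hw, hwm⟩ := exists_norm_eq_one_pow_eq_neg_one hm₀
    obtain ⟨r, hr⟩ := hexp ({z | z ^ m ≠ 1} ∩ {z | ‖z‖ = 1}) Set.inter_subset_right
      ⟨w, by norm_num [hwm], hw⟩ ⟨_, isOpen_ne_fun (continuous_pow m) continuous_const, rfl⟩
    have h₁ : (1 : ℂ) ∈ {z : ℂ | ‖z‖ = 1} := norm_one
    rw [← hr] at h₁
    exact one_notMem_pathEndT_mul (fun z hz => hz.1) h₁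
  · rintro hmn U - hne ⟨V, hV, rfl⟩
    obtain ⟨x₀, δ, hδ, hU⟩ := exists_fourierChar_mem_of_isOpen hV hne
    exact exists_pathEndT_eq_of_not_dvd hm₀ hmn hδ hU

/-- `p(z,w) = z^m - w^n` is expansive on `𝕋` (every nonempty
relatively open `U ⊆ 𝕋` has `U^{(r)} = 𝕋` for some `r`) iff `m` does not
divide `n`. -/
theorem stmt_6 (m n : ℕ) (hm : 1 ≤ m) (hn : 1 ≤ n) :
    (∀ U : Set ℂ, U ⊆ {z : ℂ | ‖z‖ = 1} → U.Nonempty →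
        (∃ V : Set ℂ, IsOpen V ∧ U = V ∩ {z : ℂ | ‖z‖ = 1}) →
        ∃ r : ℕ, pathEndT m n r U = {z : ℂ | ‖z‖ = 1}) ↔ ¬ m ∣ n :=
  stmt_6_general m n hm
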